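/- Let T(x) = 2x mod 1 on the circle [0,1) and let x₀ ∈ (0, 1/2). Let α > 0, φ(x) = d(x, x₀)^{-α} where d is the circle metric, and Y(x) = min{φ(x), φ(Tx)}. Then Y attains its global maximum value (x₀/3)^{-α} = 3^α x₀^{-α} at the point x = 2x₀/3. -/
import Mathlib


/-- Distance on the circle `ℝ/ℤ` for representatives in `[0,1)`. -/
noncomputable def circleDist (x y : ℝ) : ℝ := min |x - y| (1 - |x - y|)

/-- The doubling map `x ↦ 2x mod 1`. -/
noncomputable def doubling (x : ℝ) : ℝ := Int.fract (2 * x)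

/-- For the doubling map, `x₀ ∈ (0,1/2)`, `φ(x) = d(x,x₀)^{-α}` and
`Y(x) = min(φ(x), φ(Tx))`, the functional `Y` attains its global maximum value
`(x₀/3)^{-α} = 3^α x₀^{-α}` at the point `x = 2x₀/3`. -/
theorem kExceedance_global_max (x₀ : ℝ) (hx₀ : x₀ ∈ Set.Ioo (0 : ℝ) (1 / 2))
    (α : ℝ) (hα : 0 < α) :
    (min ((circleDist (2 * x₀ / 3) x₀) ^ (-α)) ((circleDist (doubling (2 * x₀ / 3)) x₀) ^ (-α))
        = 3 ^ α * x₀ ^ (-α))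
    ∧ ∀ x ∈ Set.Ico (0 : ℝ) 1,
        min ((circleDist x x₀) ^ (-α)) ((circleDist (doubling x) x₀) ^ (-α))
          ≤ min ((circleDist (2 * x₀ / 3) x₀) ^ (-α))
              ((circleDist (doubling (2 * x₀ / 3)) x₀) ^ (-α)) := by
  obtain ⟨h0, h1⟩ := hx₀
  have hd1 : circleDist (2 * x₀ / 3) x₀ = x₀ / 3 := by
    unfold circleDist
    have : |2 * x₀ / 3 - x₀| = x₀ / 3 := by
      rw [abs_of_nonpos (by linarith)]; ring
    rw [this, min_eq_left (by linarith)]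
  have hT : doubling (2 * x₀ / 3) = 4 * x₀ / 3 := by
    unfold doubling
    rw [show 2 * (2 * x₀ / 3) = 4 * x₀ / 3 by ring]
    exact Int.fract_eq_self.mpr ⟨by linarith, by linarith⟩
  have hd2 : circleDist (doubling (2 * x₀ / 3)) x₀ = x₀ / 3 := by
    rw [hT]; unfold circleDist
    have : |4 * x₀ / 3 - x₀| = x₀ / 3 := by
      rw [abs_of_nonneg (by linarith)]; ring
    rw [this, min_eq_left (by linarith)]
  have hval : min ((circleDist (2 * x₀ / 3) x₀) ^ (-α))
      ((circleDist (doubling (2 * x₀ / 3)) x₀) ^ (-α)) = (x₀ / 3) ^ (-α) := by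
    rw [hd1, hd2, min_self]
  have heq : (x₀ / 3 : ℝ) ^ (-α) = 3 ^ α * x₀ ^ (-α) := by
    rw [Real.div_rpow h0.le (by norm_num : (0:ℝ) ≤ 3),
      Real.rpow_neg (by norm_num : (0:ℝ) ≤ 3), div_eq_mul_inv, inv_inv, mul_comm]
  refine ⟨hval.trans heq, fun x hx => ?_⟩
  obtain ⟨hx0, hx1⟩ := hx
  rw [hval]
  -- key: either d(x,x₀) ≥ x₀/3 or d(Tx,x₀) ≥ x₀/3
  have key : x₀ / 3 ≤ circleDist x x₀ ∨ x₀ / 3 ≤ circleDist (doubling x) x₀ := by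
    by_cases h : x₀ / 3 ≤ circleDist x x₀
    · exact Or.inl h
    · right
      push_neg at h
      unfold circleDist at h
      have hlt : |x - x₀| < 1 - x₀ / 3 :=
        abs_sub_lt_iff.mpr ⟨by linarith, by linarith⟩
      have habs : |x - x₀| < x₀ / 3 := by
        rcases min_lt_iff.mp h with ha | ha
        · exact ha
        · linarith
      rcases abs_sub_lt_iff.mp habs with ⟨ha, hb⟩
      -- x ∈ (2x₀/3, 4x₀/3)
      rcases lt_or_ge (2 * x) 1 with h2 | h2
      · have hTx : doubling x = 2 * x :=
          Int.fract_eq_self.mpr ⟨by linarith, h2⟩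
        rw [hTx]
        unfold circleDist
        have habs2 : |2 * x - x₀| = 2 * x - x₀ := abs_of_nonneg (by linarith)
        rw [habs2]
        exact le_min (by linarith) (by linarith)
      · have hTx : doubling x = 2 * x - 1 := by
          unfold doubling
          have : 2 * x - 1 = 2 * x + (-1 : ℤ) := by push_cast; ring
          rw [show Int.fract (2 * x) = Int.fract (2 * x + (-1 : ℤ)) from
            (Int.fract_add_intCast (2 * x) (-1)).symm, ← this]
          exact Int.fract_eq_self.mpr ⟨by linarith, by linarith⟩
        rw [hTx]
        unfold circleDist
        have habs2 : |2 * x - 1 - x₀| = x₀ + 1 - 2 * x := by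
          rw [abs_of_nonpos (by linarith)]; ring
        rw [habs2]
        exact le_min (by linarith) (by linarith)
  have hpos : (0:ℝ) < x₀ / 3 := by linarith
  rcases key with h | h
  · exact le_trans (min_le_left _ _)
      (Real.rpow_le_rpow_of_nonpos hpos h (by linarith))
  · exact le_trans (min_le_right _ _)
      (Real.rpow_le_rpow_of_nonpos hpos h (by linarith))
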